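/- For all ξ, η ∈ C_c²((0,∞)), the coefficient function (b,a) ↦ (ξ *₊ η)(b,a) is integrable on ℝ × (0,∞) with respect to the measure a⁻² db da; that is, ∫₀^∞ ∫_ℝ |(ξ *₊ η)(b,a)| db a⁻² da < ∞. The same holds for ξ *₋ η. -/

import Mathlib

open MeasureTheory Set

/-- Coefficient function of the representation `π₊` of the real `ax+b` group:
`(ξ *₊ η)(b,a) = ∫₀^∞ e^{-2πibt} ξ(at) conj(η(t)) t⁻¹ dt`. -/
noncomputable def coeffP (ξ η : ℝ → ℂ) (b a : ℝ) : ℂ :=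
  ∫ t in Ioi (0 : ℝ),
    Complex.exp (-(2 * Real.pi * b * t : ℝ) * Complex.I) * ξ (a * t)
      * starRingEnd ℂ (η t) * (t : ℂ)⁻¹

/-- Coefficient function of the representation `π₋` of the real `ax+b` group:
`(ξ *₋ η)(b,a) = ∫₀^∞ e^{2πibt} ξ(at) conj(η(t)) t⁻¹ dt`. -/
noncomputable def coeffM (ξ η : ℝ → ℂ) (b a : ℝ) : ℂ :=
  ∫ t in Ioi (0 : ℝ),
    Complex.exp ((2 * Real.pi * b * t : ℝ) * Complex.I) * ξ (a * t)
      * starRingEnd ℂ (η t) * (t : ℂ)⁻¹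

/-- `C_c²((0,∞))`: twice continuously differentiable complex-valued functions on `ℝ`
with compact support contained in `(0,∞)`. -/
def CcTwo (f : ℝ → ℂ) : Prop :=
  ContDiff ℝ 2 f ∧ HasCompactSupport f ∧ tsupport f ⊆ Ioi (0 : ℝ)

/-- Left Haar measure `a⁻² db da` of the `ax+b` group, modelled on `ℝ × (0,∞)`
(first coordinate `b`, second coordinate `a`). -/
noncomputable def muG : Measure (ℝ × ℝ) :=
  (((volume : Measure ℝ).prod ((volume : Measure ℝ).restrict (Ioi (0 : ℝ)))).withDensity
    fun p => ENNReal.ofReal ((p.2 ^ 2)⁻¹))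


/-! For fixed `a`, `b ↦ (ξ *₊ η)(b,a)` is the Fourier transform at `b` of
`f_a(t) = ξ(at) conj(η t) t⁻¹`, a `C²` function with compact support. Integrating by parts twice
gives `(1 + (2πb)²) |f̂_a(b)| ≤ ‖f_a‖₁ + ‖f_a''‖₁`, and by the Leibniz rule the right side is
bounded uniformly in `a` on compact sets. The supports force `f_a = 0` unless `a ∈ [δ, M]` with
`0 < δ`, so `|ξ *₊ η|` is dominated by `C (1 + b²)⁻¹ 1_{[δ,M]}(a)`, which is integrable for
`a⁻² db da`. Finally `(ξ *₋ η)(b,a) = (ξ *₊ η)(-b,a)`. -/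

open FourierTransform Real Finset Filter

section IteratedDeriv

variable {E : Type*} [NormedAddCommGroup E] [NormedSpace ℝ E]

theorem HasCompactSupport.iteratedDeriv {f : ℝ → E} (hf : HasCompactSupport f) (n : ℕ) :
    HasCompactSupport (_root_.iteratedDeriv n f) := by
  convert (hf.iteratedFDeriv (𝕜 := ℝ) n).comp_left (g := fun L => L fun _ => (1 : ℝ)) (by simp)
    using 1
  ext x
  simp [iteratedDeriv_eq_iteratedFDeriv]

theorem HasCompactSupport.integrable_iteratedDeriv {f : ℝ → E} {N : ℕ∞} (hf : ContDiff ℝ N f)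
    (hfs : HasCompactSupport f) (n : ℕ) (hn : n ≤ N) : Integrable (_root_.iteratedDeriv n f) :=
  (hf.continuous_iteratedDeriv n (by exact_mod_cast hn)).integrable_of_hasCompactSupport
    (hfs.iteratedDeriv n)

end IteratedDeriv

theorem one_add_sq_mul_norm_fourier_le {E : Type*} [NormedAddCommGroup E] [NormedSpace ℂ E]
    {f : ℝ → E} (hf : ContDiff ℝ 2 f) (hfs : HasCompactSupport f) (b : ℝ) :
    (1 + (2 * π * b) ^ 2) * ‖𝓕 f b‖ ≤ (∫ t, ‖f t‖) + ∫ t, ‖iteratedDeriv 2 f t‖ := by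
  have hf' : ContDiff ℝ (2 : ℕ∞) f := by exact_mod_cast hf
  have h2 := congrFun (fourier_iteratedDeriv hf' (hfs.integrable_iteratedDeriv hf') le_rfl) b
  calc (1 + (2 * π * b) ^ 2) * ‖𝓕 f b‖ = ‖𝓕 f b‖ + ‖𝓕 (iteratedDeriv 2 f) b‖ := by
        rw [h2, norm_smul, norm_pow]
        simp only [mul_pow, Complex.norm_mul, Complex.norm_ofNat, Complex.norm_real, norm_eq_abs,
          abs_of_pos pi_pos, Complex.norm_I, mul_one, sq_abs]
        ring
    _ ≤ _ := add_le_add (VectorFourier.norm_fourierIntegral_le_integral_norm _ _ _ _ _)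
        (VectorFourier.norm_fourierIntegral_le_integral_norm _ _ _ _ _)

theorem norm_iteratedDeriv_comp_mul_mul_le {n : ℕ} {ξ g : ℝ → ℂ} (hξ : ContDiff ℝ n ξ)
    (hg : ContDiff ℝ n g) (a t : ℝ) :
    ‖iteratedDeriv n (fun t => ξ (a * t) * g t) t‖ ≤ ∑ i ∈ range (n + 1),
      (n.choose i : ℝ) * (|a| ^ i * ‖iteratedDeriv i ξ (a * t)‖) * ‖iteratedDeriv (n - i) g t‖ := by
  have hξa : ContDiff ℝ n fun t => ξ (a * t) := hξ.comp (contDiff_const.mul contDiff_id)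
  have h := norm_iteratedFDeriv_mul_le (𝕜 := ℝ) hξa hg t le_rfl
  simp only [norm_iteratedFDeriv_eq_norm_iteratedDeriv] at h
  refine h.trans_eq (sum_congr rfl fun i hi => ?_)
  have hi' : (i : WithTop ℕ∞) ≤ n := by exact_mod_cast Nat.lt_succ_iff.1 (mem_range.1 hi)
  rw [iteratedDeriv_comp_const_smul (hξ.of_le hi') a, norm_smul, norm_pow, Real.norm_eq_abs]

theorem exists_integral_norm_iteratedDeriv_comp_mul_mul_le {n : ℕ} {ξ g : ℝ → ℂ}
    (hξ : ContDiff ℝ n ξ) (hξs : HasCompactSupport ξ) (hg : ContDiff ℝ n g)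
    (hgs : HasCompactSupport g) (A : ℝ) :
    ∃ C, ∀ a, |a| ≤ A → ∫ t, ‖iteratedDeriv n (fun t => ξ (a * t) * g t) t‖ ≤ C := by
  have hbdd : ∀ i ∈ range (n + 1), ∃ B, ∀ x, ‖iteratedDeriv i ξ x‖ ≤ B := fun i hi =>
    (hξ.continuous_iteratedDeriv i (by exact_mod_cast Nat.lt_succ_iff.1 (mem_range.1 hi))
      ).bounded_above_of_compact_support (hξs.iteratedDeriv i)
  choose! B hB using hbdd
  set h : ℝ → ℝ := fun t => ∑ i ∈ range (n + 1),
    (n.choose i : ℝ) * (A ^ i * B i) * ‖iteratedDeriv (n - i) g t‖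
  have hint : Integrable h := integrable_finsetSum _ fun i _ =>
    ((hgs.integrable_iteratedDeriv hg (n - i) (by exact_mod_cast n.sub_le i)).norm).const_mul _
  refine ⟨∫ t, h t, fun a ha => integral_mono_of_nonneg
    (Eventually.of_forall fun _ => norm_nonneg _) hint (Eventually.of_forall fun t => ?_)⟩
  refine (norm_iteratedDeriv_comp_mul_mul_le hξ hg a t).trans (sum_le_sum fun i hi => ?_)
  gcongr
  exacts [pow_nonneg ((abs_nonneg a).trans ha) i, hB i hi _]

theorem HasCompactSupport.exists_tsupport_subset_Icc {E : Type*} [Zero E] {f : ℝ → E}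
    (hf : HasCompactSupport f) (hpos : tsupport f ⊆ Ioi 0) :
    ∃ ε R : ℝ, 0 < ε ∧ ε ≤ R ∧ tsupport f ⊆ Icc ε R := by
  rcases (tsupport f).eq_empty_or_nonempty with h | h
  · exact ⟨1, 1, one_pos, le_rfl, h ▸ empty_subset _⟩
  · obtain ⟨ε, hε, hεle⟩ := hf.exists_isLeast h
    obtain ⟨R, hR, hRge⟩ := hf.exists_isGreatest h
    exact ⟨ε, R, hpos hε, hεle hR, fun x hx => ⟨hεle hx, hRge hx⟩⟩

theorem CcTwo.conj_mul_inv {η : ℝ → ℂ} (hη : CcTwo η) :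
    CcTwo fun t : ℝ => starRingEnd ℂ (η t) * (t : ℂ)⁻¹ := by
  obtain ⟨hη2, hηs, hηpos⟩ := hη
  have hsub : Function.support (fun t : ℝ => starRingEnd ℂ (η t) * (t : ℂ)⁻¹)
      ⊆ Function.support η := fun t ht h => ht (by simp [h])
  refine ⟨contDiff_iff_contDiffAt.2 fun t => ?_, hηs.mono hsub, (closure_mono hsub).trans hηpos⟩
  by_cases ht : t ∈ tsupport η
  · have ht0 : (t : ℂ) ≠ 0 := Complex.ofReal_ne_zero.2 (hηpos ht).ne'
    exact (Complex.conjCLE.contDiff.comp hη2).contDiffAt.mul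
      (Complex.ofRealCLM.contDiff.contDiffAt.inv ht0)
  · refine (contDiffAt_const (c := (0 : ℂ))).congr_of_eventuallyEq ?_
    filter_upwards [notMem_tsupport_iff_eventuallyEq.1 ht] with x hx
    simp [hx]

theorem coeffP_eq_fourier (ξ : ℝ → ℂ) {η : ℝ → ℂ} (hη : Function.support η ⊆ Ici 0) (b a : ℝ) :
    coeffP ξ η b a = 𝓕 (fun t : ℝ => ξ (a * t) * (starRingEnd ℂ (η t) * (t : ℂ)⁻¹)) b := by
  rw [fourier_real_eq_integral_exp_smul,
    ← setIntegral_eq_integral_of_forall_compl_eq_zero (s := Ioi (0 : ℝ)) fun t ht => ?_, coeffP]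
  · refine setIntegral_congr_fun measurableSet_Ioi fun t _ => ?_
    rw [smul_eq_mul, show ((-2 * π * t * b : ℝ) : ℂ) = -((2 * π * b * t : ℝ) : ℂ) by
      push_cast; ring]
    ring
  · rcases (notMem_Ioi.1 ht).lt_or_eq with ht | rfl
    · simp [Function.notMem_support.1 fun h => (hη h).not_gt ht]
    · simp

theorem coeffM_eq_coeffP_neg (ξ η : ℝ → ℂ) (b a : ℝ) : coeffM ξ η b a = coeffP ξ η (-b) a := by
  refine setIntegral_congr_fun measurableSet_Ioi fun t _ => ?_
  congr 4
  push_cast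
  ring

theorem coeffP_eq_zero_of_notMem_Icc {ξ η : ℝ → ℂ} {εξ Rξ εη Rη : ℝ} (hεη : 0 < εη) (hRη : 0 < Rη)
    (hξ : Function.support ξ ⊆ Icc εξ Rξ) (hη : Function.support η ⊆ Icc εη Rη) {a : ℝ}
    (ha : 0 < a) (hnot : a ∉ Icc (εξ / Rη) (Rξ / εη)) (b : ℝ) : coeffP ξ η b a = 0 := by
  suffices h : ∀ t, ξ (a * t) * starRingEnd ℂ (η t) = 0 by
    refine (setIntegral_congr_fun measurableSet_Ioi fun t _ => ?_).trans (integral_zero _ _)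
    simp [mul_assoc, h t]
  intro t
  by_cases ht : η t = 0
  · simp [ht]
  obtain ⟨hεt, htR⟩ := hη ht
  suffices a * t ∉ Function.support ξ by simp [Function.notMem_support.1 this]
  intro hat
  obtain ⟨h1, h2⟩ := hξ hat
  refine hnot ⟨(div_le_iff₀ hRη).2 ?_, (le_div_iff₀ hεη).2 ?_⟩ <;> nlinarith

theorem stronglyMeasurable_coeffP {ξ η : ℝ → ℂ} (hξ : Measurable ξ) (hη : Measurable η) :
    StronglyMeasurable fun p : ℝ × ℝ => coeffP ξ η p.1 p.2 :=
  StronglyMeasurable.integral_prod_right' (f := fun q : (ℝ × ℝ) × ℝ =>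
    Complex.exp (-(2 * π * q.1.1 * q.2 : ℝ) * Complex.I) * ξ (q.1.2 * q.2)
      * starRingEnd ℂ (η q.2) * (q.2 : ℂ)⁻¹) (Measurable.stronglyMeasurable (by fun_prop))

theorem ae_muG_snd_pos : ∀ᵐ p ∂muG, 0 < p.2 :=
  (withDensity_absolutelyContinuous _ _).ae_le <|
    Measure.quasiMeasurePreserving_snd.ae (ae_restrict_mem measurableSet_Ioi)

theorem integrable_muG_of_norm_le {E : Type*} [NormedAddCommGroup E] {F : ℝ × ℝ → E}
    (hF : AEStronglyMeasurable F muG) {C δ M : ℝ} (hδ : 0 < δ)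
    (hzero : ∀ b a, 0 < a → a ∉ Icc δ M → F (b, a) = 0)
    (hle : ∀ b a, a ∈ Icc δ M → ‖F (b, a)‖ ≤ C * (1 + b ^ 2)⁻¹) :
    Integrable F muG := by
  set G : ℝ × ℝ → ℝ := fun p => C * (1 + p.1 ^ 2)⁻¹ * (Icc δ M).indicator 1 p.2
  have hG : Integrable G muG := by
    rw [muG, integrable_withDensity_iff (by fun_prop) (.of_forall fun _ => ENNReal.ofReal_lt_top)]
    have hdens : (fun p : ℝ × ℝ => G p * (ENNReal.ofReal (p.2 ^ 2)⁻¹).toReal) = fun p =>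
        C * (1 + p.1 ^ 2)⁻¹ * (Icc δ M).indicator (fun a => (a ^ 2)⁻¹) p.2 := by
      ext p
      rw [ENNReal.toReal_ofReal (by positivity)]
      by_cases h : p.2 ∈ Icc δ M <;> simp [G, h]
    rw [hdens]
    refine (integrable_inv_one_add_sq.const_mul C).mul_prod (Integrable.restrict ?_)
    refine (integrable_indicator_iff measurableSet_Icc).2 ?_
    exact ContinuousOn.integrableOn_Icc <| continuousOn_id.pow 2 |>.inv₀ fun x hx =>
      pow_ne_zero 2 (hδ.trans_le hx.1).ne'
  refine hG.mono' hF ?_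
  filter_upwards [ae_muG_snd_pos] with ⟨b, a⟩ ha
  by_cases h : a ∈ Icc δ M
  · simpa [G, h] using hle b a h
  · simp [G, h, hzero b a ha h]

theorem exists_norm_coeffP_le {ξ η : ℝ → ℂ} (hξ : CcTwo ξ) (hη : CcTwo η) :
    ∃ C δ M : ℝ, 0 < δ ∧ (∀ b a, 0 < a → a ∉ Icc δ M → coeffP ξ η b a = 0) ∧
      ∀ b a, a ∈ Icc δ M → ‖coeffP ξ η b a‖ ≤ C * (1 + b ^ 2)⁻¹ := by
  obtain ⟨εξ, Rξ, hεξ, -, hξIcc⟩ := hξ.2.1.exists_tsupport_subset_Icc hξ.2.2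
  obtain ⟨εη, Rη, hεη, hεRη, hηIcc⟩ := hη.2.1.exists_tsupport_subset_Icc hη.2.2
  have hRη : 0 < Rη := hεη.trans_le hεRη
  set M := Rξ / εη
  obtain ⟨hg, hgs, -⟩ := hη.conj_mul_inv
  obtain ⟨C₀, hC₀⟩ := exists_integral_norm_iteratedDeriv_comp_mul_mul_le (n := 0)
    (hξ.1.of_le (by norm_num)) hξ.2.1 (hg.of_le (by norm_num)) hgs M
  obtain ⟨C₂, hC₂⟩ := exists_integral_norm_iteratedDeriv_comp_mul_mul_le (n := 2)
    hξ.1 hξ.2.1 hg hgs M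
  refine ⟨C₀ + C₂, εξ / Rη, M, by positivity, fun b a ha hnot => coeffP_eq_zero_of_notMem_Icc
    hεη hRη ((subset_tsupport ξ).trans hξIcc) ((subset_tsupport η).trans hηIcc) ha hnot b,
    fun b a ha => ?_⟩
  have haM : |a| ≤ M := (abs_of_pos ((div_pos hεξ hRη).trans_le ha.1)).le.trans ha.2
  have hpos : 0 < 1 + (2 * π * b) ^ 2 := by positivity
  have hb : 1 + b ^ 2 ≤ 1 + (2 * π * b) ^ 2 := by
    rw [mul_pow]
    gcongr
    exact le_mul_of_one_le_left (sq_nonneg b) (by nlinarith [pi_gt_three])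
  have h₀ := hC₀ a haM
  have h₂ := hC₂ a haM
  rw [iteratedDeriv_zero] at h₀
  rw [coeffP_eq_fourier ξ ((subset_tsupport η).trans (hη.2.2.trans Ioi_subset_Ici_self)),
    ← div_eq_mul_inv]
  calc _ ≤ ((∫ t, ‖ξ (a * t) * (starRingEnd ℂ (η t) * (t : ℂ)⁻¹)‖) + ∫ t, ‖iteratedDeriv 2
        (fun t => ξ (a * t) * (starRingEnd ℂ (η t) * (t : ℂ)⁻¹)) t‖) / (1 + (2 * π * b) ^ 2) :=
        (le_div_iff₀' hpos).2 <| one_add_sq_mul_norm_fourier_le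
          ((hξ.1.comp (contDiff_const.mul contDiff_id)).mul hg) hgs.mul_left b
    _ ≤ (C₀ + C₂) / (1 + (2 * π * b) ^ 2) := by gcongr
    _ ≤ (C₀ + C₂) / (1 + b ^ 2) := div_le_div_of_nonneg_left ((add_nonneg
          (integral_nonneg fun _ => norm_nonneg _) (integral_nonneg fun _ => norm_nonneg _)).trans
          (add_le_add h₀ h₂)) (by positivity) hb

/-- **Convenient coefficient functions are integrable** (part of Lemma 4.3 of
Choi–Ghandehari): for `ξ, η ∈ C_c²((0,∞))`, the coefficient functions `ξ *₊ η` and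
`ξ *₋ η` are integrable on `ℝ × (0,∞)` with respect to the left Haar measure
`a⁻² db da`. -/
theorem coefficient_functions_integrable (ξ η : ℝ → ℂ)
    (hξ : CcTwo ξ) (hη : CcTwo η) :
    Integrable (fun p : ℝ × ℝ => coeffP ξ η p.1 p.2) muG ∧
    Integrable (fun p : ℝ × ℝ => coeffM ξ η p.1 p.2) muG := by
  obtain ⟨C, δ, M, hδ, hzero, hle⟩ := exists_norm_coeffP_le hξ hη
  have hmeas := stronglyMeasurable_coeffP hξ.1.continuous.measurable hη.1.continuous.measurable
  refine ⟨integrable_muG_of_norm_le hmeas.aestronglyMeasurable hδ hzero hle, ?_⟩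
  simp only [coeffM_eq_coeffP_neg]
  exact integrable_muG_of_norm_le
    (hmeas.comp_measurable (measurable_fst.neg.prodMk measurable_snd)).aestronglyMeasurable hδ
    (fun b a ha hnot => hzero (-b) a ha hnot) fun b a ha => by simpa using hle (-b) a ha
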